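/- Let Φ(x,y) = V_T(xy) conj(V_T(y)) x^{iβ} e^{−(x+1)y/T} e^{iτ(x−1)y} where V_T is smooth, supported in [T,3T], with |V_T^{(j)}| ≪_j T^{−j}, and τ, T ≥ 1. Then for every A ≥ 0 the inner y-integral satisfies |∫₀^∞ V_T(xy) conj(V_T(y)) e^{−(x+1)y/T} e^{iτ(x−1)y} y dy| ≪_A T² (1 + T|τ||x−1|)^{−A}, and consequently |∫₀^∞ V_T(x) x^{iβ} e^{−x/T} e^{iτx} dx|² ≪ T²/(Tτ), i.e., the Laplace-type integral is ≪ T/τ^{1/2} uniformly in β when τ ≍ |the relevant frequency|/T. -/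

import Mathlib

open Complex Set MeasureTheory Real Filter Topology Finset

private lemma gst_hasDerivAt_cexp_mul (c : ℂ) (y : ℝ) :
    HasDerivAt (fun t : ℝ => Complex.exp (c * t)) (c * Complex.exp (c * y)) y := by
  have h : HasDerivAt (fun z : ℂ => Complex.exp (c * z)) (c * Complex.exp (c * (y:ℂ))) (y : ℂ) := by
    simpa [mul_comm, Function.comp_def] using (Complex.hasDerivAt_exp (c * (y:ℂ))).comp (y:ℂ)
      ((hasDerivAt_id (y:ℂ)).const_mul c)
  exact h.comp_ofReal

private lemma gst_contDiff_cexp_mul (c : ℂ) : ContDiff ℝ (⊤ : ℕ∞) fun t : ℝ => Complex.exp (c * t) :=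
  Complex.contDiff_exp.comp (contDiff_const.mul Complex.ofRealCLM.contDiff)

private lemma gst_iteratedDeriv_cexp_mul (c : ℂ) (n : ℕ) :
    iteratedDeriv n (fun t : ℝ => Complex.exp (c * t)) = fun t : ℝ => c ^ n * Complex.exp (c * t) := by
  induction n with
  | zero => simp
  | succ n ih =>
    rw [iteratedDeriv_succ, ih]
    funext t
    rw [deriv_const_mul _ (gst_hasDerivAt_cexp_mul c t).differentiableAt,
      (gst_hasDerivAt_cexp_mul c t).deriv]
    ring

private lemma gst_contDiff_ofReal : ContDiff ℝ (⊤ : ℕ∞) (fun t : ℝ => (t : ℂ)) :=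
  Complex.ofRealCLM.contDiff

private lemma gst_deriv_ofReal : deriv (fun t : ℝ => (t : ℂ)) = fun _ => 1 := by
  funext t
  have h : HasDerivAt (fun t : ℝ => (t : ℂ)) 1 t := by
    simpa using (hasDerivAt_id t).ofReal_comp
  exact h.deriv

private lemma gst_iteratedDeriv_const_zero (n : ℕ) (c : ℂ) :
    iteratedDeriv (n + 1) (fun _ : ℝ => c) = fun _ => 0 := by
  induction n with
  | zero => funext t; simp [iteratedDeriv_succ]
  | succ n ih => rw [iteratedDeriv_succ, ih]; funext t; simp

private lemma gst_integral_deriv_eq_zero {φ : ℝ → ℂ} (hφ : ContDiff ℝ 1 φ)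
    (h : HasCompactSupport φ) : ∫ y : ℝ, deriv φ y = 0 := by
  have hi : Integrable (deriv φ) :=
    (hφ.continuous_deriv le_rfl).integrable_of_hasCompactSupport h.deriv
  have h1 := h.integral_Ioi_deriv_eq hφ 0
  have h2 := h.integral_Iic_deriv_eq hφ 0
  have h3 := intervalIntegral.integral_Iic_add_Ioi (μ := volume) (b := (0:ℝ))
    hi.integrableOn hi.integrableOn
  rw [h1, h2] at h3
  rw [← h3]; ring

private lemma gst_norm_exp_I_mul (ξ y : ℝ) : ‖Complex.exp (Complex.I * ξ * y)‖ = 1 := by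
  rw [Complex.norm_exp]
  simp

private lemma gst_ibp (n : ℕ) :
    ∀ (g : ℝ → ℂ), ContDiff ℝ ((⊤:ℕ∞):WithTop ℕ∞) g → HasCompactSupport g → ∀ (ξ : ℝ), ξ ≠ 0 →
    ‖∫ y : ℝ, g y * Complex.exp (Complex.I * ξ * y)‖
      ≤ (|ξ|⁻¹) ^ n * ∫ y : ℝ, ‖iteratedDeriv n g y‖ := by
  induction n with
  | zero =>
    intro g hg hsupp ξ hξ
    simp only [pow_zero, one_mul, iteratedDeriv_zero]
    calc ‖∫ y : ℝ, g y * Complex.exp (Complex.I * ξ * y)‖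
        ≤ ∫ y : ℝ, ‖g y * Complex.exp (Complex.I * ξ * y)‖ := norm_integral_le_integral_norm _
      _ = ∫ y : ℝ, ‖g y‖ := by
          congr 1; funext y
          rw [norm_mul, gst_norm_exp_I_mul, mul_one]
  | succ n ih =>
    intro g hg hsupp ξ hξ
    have hgd : ContDiff ℝ ((⊤:ℕ∞):WithTop ℕ∞) (deriv g) := (contDiff_infty_iff_deriv.mp hg).2
    have hsd : HasCompactSupport (deriv g) := hsupp.deriv
    have hce : Continuous fun y : ℝ => Complex.exp (Complex.I * ξ * y) :=
      (gst_contDiff_cexp_mul _).continuous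
    have hint1 : Integrable fun y : ℝ => deriv g y * Complex.exp (Complex.I * ξ * y) :=
      (hgd.continuous.mul hce).integrable_of_hasCompactSupport hsd.mul_right
    have hint2 : Integrable fun y : ℝ =>
        g y * (Complex.I * ξ * Complex.exp (Complex.I * ξ * y)) :=
      (hg.continuous.mul (continuous_const.mul hce)).integrable_of_hasCompactSupport
        hsupp.mul_right
    have hφ1 : ContDiff ℝ 1 (fun y : ℝ => g y * Complex.exp (Complex.I * ξ * y)) :=
      (hg.mul ((gst_contDiff_cexp_mul _).of_le (by simp))).of_le (by exact_mod_cast (le_top : (1:ℕ∞) ≤ ⊤))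
    have hφs : HasCompactSupport (fun y : ℝ => g y * Complex.exp (Complex.I * ξ * y)) :=
      hsupp.mul_right
    have hderiv : ∀ y : ℝ, deriv (fun y : ℝ => g y * Complex.exp (Complex.I * ξ * y)) y =
        deriv g y * Complex.exp (Complex.I * ξ * y)
          + g y * (Complex.I * ξ * Complex.exp (Complex.I * ξ * y)) := fun y =>
      (((hg.differentiable (by simp) y).hasDerivAt).mul (gst_hasDerivAt_cexp_mul _ y)).deriv
    have hzero : (0:ℂ) = ∫ y : ℝ, (deriv g y * Complex.exp (Complex.I * ξ * y)
        + g y * (Complex.I * ξ * Complex.exp (Complex.I * ξ * y))) := by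
      rw [← gst_integral_deriv_eq_zero hφ1 hφs]
      congr 1; funext y; rw [hderiv y]
    rw [integral_add hint1 hint2] at hzero
    have hm : ∫ y : ℝ, g y * (Complex.I * ξ * Complex.exp (Complex.I * ξ * y))
        = (Complex.I * ξ) * ∫ y : ℝ, g y * Complex.exp (Complex.I * ξ * y) := by
      rw [← MeasureTheory.integral_const_mul]
      congr 1; funext y; ring
    rw [hm] at hzero
    have hIξ : (Complex.I * (ξ:ℂ)) ≠ 0 := by
      apply mul_ne_zero Complex.I_ne_zero
      exact_mod_cast hξ
    have key : ∫ y : ℝ, g y * Complex.exp (Complex.I * ξ * y)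
        = (Complex.I * ξ)⁻¹ * (- ∫ y : ℝ, deriv g y * Complex.exp (Complex.I * ξ * y)) := by
      apply mul_left_cancel₀ hIξ; rw [← mul_assoc, mul_inv_cancel₀ hIξ, one_mul]
      linear_combination -hzero
    have hnormc : ‖(Complex.I * (ξ:ℂ))⁻¹‖ = |ξ|⁻¹ := by
      rw [norm_inv]; congr 1
      simp
    calc ‖∫ y : ℝ, g y * Complex.exp (Complex.I * ξ * y)‖
        = |ξ|⁻¹ * ‖∫ y : ℝ, deriv g y * Complex.exp (Complex.I * ξ * y)‖ := by
          rw [key, norm_mul, hnormc, norm_neg]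
      _ ≤ |ξ|⁻¹ * ((|ξ|⁻¹) ^ n * ∫ y : ℝ, ‖iteratedDeriv n (deriv g) y‖) :=
          mul_le_mul_of_nonneg_left (ih (deriv g) hgd hsd ξ hξ) (inv_nonneg.mpr (abs_nonneg ξ))
      _ = (|ξ|⁻¹) ^ (n+1) * ∫ y : ℝ, ‖iteratedDeriv (n+1) g y‖ := by
          have he : (fun y : ℝ => ‖iteratedDeriv n (deriv g) y‖)
              = fun y : ℝ => ‖iteratedDeriv (n+1) g y‖ := by
            funext y; rw [iteratedDeriv_succ']
          rw [he, pow_succ', mul_assoc]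

private lemma gst_mul_bound {f g : ℝ → ℂ} (hf : ContDiff ℝ ((⊤:ℕ∞):WithTop ℕ∞) f)
    (hg : ContDiff ℝ ((⊤:ℕ∞):WithTop ℕ∞) g) {y : ℝ} {n : ℕ}
    {P Q a b T : ℝ} (hT : 0 < T) (hP : 0 ≤ P) (hQ : 0 ≤ Q) (ha : 0 ≤ a) (hb : 0 ≤ b)
    (h1 : ∀ j, j ≤ n → ‖iteratedDeriv j f y‖ ≤ P * a ^ j / T ^ j)
    (h2 : ∀ j, j ≤ n → ‖iteratedDeriv j g y‖ ≤ Q * b ^ j / T ^ j) :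
    ‖iteratedDeriv n (fun z => f z * g z) y‖ ≤ P * Q * (a + b) ^ n / T ^ n := by
  rw [← norm_iteratedFDeriv_eq_norm_iteratedDeriv]
  refine (norm_iteratedFDeriv_mul_le hf hg y
    (by exact_mod_cast (le_top : ((n:ℕ∞)) ≤ ⊤))).trans ?_
  have step : ∀ i ∈ Finset.range (n+1),
      (n.choose i : ℝ) * ‖iteratedFDeriv ℝ i f y‖ * ‖iteratedFDeriv ℝ (n-i) g y‖
        ≤ (P * Q / T ^ n) * (a ^ i * b ^ (n - i) * (n.choose i : ℝ)) := by
    intro i hi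
    have hin : i ≤ n := Nat.lt_succ_iff.mp (Finset.mem_range.mp hi)
    have e1 : ‖iteratedFDeriv ℝ i f y‖ ≤ P * a ^ i / T ^ i := by
      rw [norm_iteratedFDeriv_eq_norm_iteratedDeriv]; exact h1 i hin
    have e2 : ‖iteratedFDeriv ℝ (n-i) g y‖ ≤ Q * b ^ (n-i) / T ^ (n-i) := by
      rw [norm_iteratedFDeriv_eq_norm_iteratedDeriv]; exact h2 _ (Nat.sub_le n i)
    have hTn : T ^ i * T ^ (n - i) = T ^ n := by
      rw [← pow_add]; congr 1; omega
    calc (n.choose i : ℝ) * ‖iteratedFDeriv ℝ i f y‖ * ‖iteratedFDeriv ℝ (n-i) g y‖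
        ≤ (n.choose i : ℝ) * (P * a ^ i / T ^ i) * (Q * b ^ (n-i) / T ^ (n-i)) := by
          apply mul_le_mul (mul_le_mul_of_nonneg_left e1 (by positivity)) e2 (norm_nonneg _)
          positivity
      _ = (P * Q / T ^ n) * (a ^ i * b ^ (n - i) * (n.choose i : ℝ)) := by
          rw [← hTn]; field_simp
  refine (Finset.sum_le_sum step).trans ?_
  rw [← Finset.mul_sum, ← add_pow]
  ring_nf
  exact le_refl _

private noncomputable def gstJ (T τ x : ℝ) (V : ℝ → ℂ) : ℂ :=
  ∫ y in Ioi (0:ℝ), V (x * y) * (starRingEnd ℂ) (V y) *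
      Complex.exp (-((x:ℂ) + 1) * (y:ℂ) / (T:ℂ)) *
      Complex.exp ((τ:ℂ) * ((x:ℂ) - 1) * (y:ℂ) * Complex.I) * (y:ℂ)

private lemma gst_key (D : ℕ → ℝ) (n : ℕ) :
    ∃ C > (0:ℝ), ∀ (T τ x : ℝ) (V : ℝ → ℂ), 1 ≤ T → 1 ≤ τ →
      ContDiff ℝ (⊤ : ℕ∞) V → Function.support V ⊆ Icc T (3 * T) →
      (∀ (j : ℕ) (z : ℝ), ‖iteratedDeriv j V z‖ ≤ D j / T ^ j) →
      (x ∉ Icc (1/3 : ℝ) 3 → gstJ T τ x V = 0) ∧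
      ‖gstJ T τ x V‖ ≤ C * T ^ 2 ∧
      (x ≠ 1 → ‖gstJ T τ x V‖ * (T * τ * |x - 1|) ^ n ≤ C * T ^ 2) := by
  set S : ℝ := 1 + ∑ j ∈ Finset.range (n+1), |D j| with hSdef
  have hS1 : 1 ≤ S := by
    have : 0 ≤ ∑ j ∈ Finset.range (n+1), |D j| :=
      Finset.sum_nonneg fun j _ => abs_nonneg _
    simp [hSdef]; linarith
  have hS0 : 0 < S := lt_of_lt_of_le one_pos hS1
  have hDS : ∀ j, j ≤ n → D j ≤ S := by
    intro j hj
    have h1 : |D j| ≤ ∑ i ∈ Finset.range (n+1), |D i| :=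
      Finset.single_le_sum (fun i _ => abs_nonneg (D i)) (Finset.mem_range.mpr (by omega))
    calc D j ≤ |D j| := le_abs_self _
      _ ≤ S := by simp [hSdef]; linarith
  refine ⟨6 * S^2 * 9^n + 6 * S^2, by positivity, ?_⟩
  intro T τ x V hT hτ hV hsupp hD
  have hT0 : 0 < T := lt_of_lt_of_le one_pos hT
  have hτ0 : 0 < τ := lt_of_lt_of_le one_pos hτ
  -- the integrand vanishes identically when x ∉ [1/3, 3]
  have hvanish : x ∉ Icc (1/3 : ℝ) 3 → gstJ T τ x V = 0 := by
    intro hx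
    have hzero : ∀ y : ℝ, V (x * y) * (starRingEnd ℂ) (V y) *
        Complex.exp (-((x:ℂ) + 1) * (y:ℂ) / (T:ℂ)) *
        Complex.exp ((τ:ℂ) * ((x:ℂ) - 1) * (y:ℂ) * Complex.I) * (y:ℂ) = 0 := by
      intro y
      by_cases hVy : V y = 0
      · simp [hVy]
      · have hy : y ∈ Icc T (3*T) := hsupp (Function.mem_support.mpr hVy)
        have hVxy : V (x * y) = 0 := by
          by_contra hne
          have hxy : x * y ∈ Icc T (3*T) := hsupp (Function.mem_support.mpr hne)
          obtain ⟨hy1, hy2⟩ := hy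
          obtain ⟨hxy1, hxy2⟩ := hxy
          apply hx
          have hy0 : 0 < y := lt_of_lt_of_le hT0 hy1
          constructor
          · nlinarith
          · nlinarith
        simp [hVxy]
    unfold gstJ
    rw [MeasureTheory.setIntegral_congr_fun measurableSet_Ioi fun y _ => hzero y]
    simp
  refine ⟨hvanish, ?_⟩
  by_cases hxIcc : x ∈ Icc (1/3 : ℝ) 3
  swap
  · rw [hvanish hxIcc]
    constructor
    · simp; positivity
    · intro _; simp; positivity
  obtain ⟨hx1, hx3⟩ := hxIcc
  have hx0 : 0 < x := lt_of_lt_of_le (by norm_num) hx1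
  set w : ℂ := -((x:ℂ) + 1)/(T:ℂ) with hwdef
  set ξ : ℝ := τ * (x - 1) with hξdef
  set g : ℝ → ℂ := fun y => V (x*y) * (starRingEnd ℂ) (V y) * Complex.exp (w * y) * (y:ℂ)
    with hgdef
  have hgoff : ∀ y : ℝ, y ∉ Icc T (3*T) → g y = 0 := by
    intro y hy
    have hVy : V y = 0 := by
      by_contra hne
      exact hy (hsupp (Function.mem_support.mpr hne))
    simp [hgdef, hVy]
  have hgc : HasCompactSupport g := HasCompactSupport.intro isCompact_Icc hgoff
  have hconjV : ContDiff ℝ (⊤ : ℕ∞) (fun y : ℝ => (starRingEnd ℂ) (V y)) :=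
    Complex.conjCLE.contDiff.comp hV
  have hgV : ContDiff ℝ (⊤ : ℕ∞) g := by
    refine ContDiff.mul (ContDiff.mul (ContDiff.mul ?_ hconjV) (gst_contDiff_cexp_mul w))
      gst_contDiff_ofReal
    exact hV.comp (contDiff_const.mul contDiff_id)
  have hJeq : gstJ T τ x V = ∫ y : ℝ, g y * Complex.exp (Complex.I * ξ * y) := by
    unfold gstJ
    rw [MeasureTheory.setIntegral_eq_integral_of_forall_compl_eq_zero (fun y hy => ?_)]
    · congr 1
      funext y
      have h1 : w * (y:ℂ) = -((x:ℂ)+1) * y / T := by rw [hwdef]; ring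
      have h2 : Complex.I * (ξ:ℂ) * (y:ℂ) = (τ:ℂ) * ((x:ℂ)-1) * (y:ℂ) * Complex.I := by
        rw [hξdef]; push_cast; ring
      rw [hgdef]
      simp only []
      rw [h1, h2]
      ring
    · have hVy : V y = 0 := by
        by_contra hne
        have := hsupp (Function.mem_support.mpr hne)
        exact hy (lt_of_lt_of_le hT0 this.1)
      simp [hVy]
  -- bounds on iterated derivatives of the factors, for y in [T, 3T]
  have hB1 : ∀ j, j ≤ n → ∀ y : ℝ, ‖iteratedDeriv j (fun y => V (x*y)) y‖ ≤ S * 3^j / T^j := by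
    intro j hj y
    have hiter := iteratedDeriv_comp_const_smul (hV.of_le (by exact_mod_cast le_top) : ContDiff ℝ j V) x
    rw [congrFun hiter y, norm_smul, norm_pow, Real.norm_eq_abs]
    have hxabs : |x| ≤ 3 := by rw [abs_of_pos hx0]; exact hx3
    calc |x|^j * ‖iteratedDeriv j V (x*y)‖ ≤ 3^j * (D j / T^j) := by
          exact mul_le_mul (pow_le_pow_left₀ (abs_nonneg x) hxabs j) (hD j (x*y))
            (norm_nonneg _) (by positivity)
      _ ≤ 3^j * (S / T^j) := by
          have := hDS j hj
          gcongr
      _ = S * 3^j / T^j := by ring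
  have hB2 : ∀ (j : ℕ) (y : ℝ), ‖iteratedDeriv j (fun y => (starRingEnd ℂ) (V y)) y‖
      = ‖iteratedDeriv j V y‖ := by
    intro j y
    have hfe : (fun y : ℝ => (starRingEnd ℂ) (V y)) = (⇑(RCLike.conjLIE (K := ℂ)) ∘ V) := rfl
    rw [← norm_iteratedFDeriv_eq_norm_iteratedDeriv, hfe,
      LinearIsometryEquiv.norm_iteratedFDeriv_comp_left,
      norm_iteratedFDeriv_eq_norm_iteratedDeriv]
  have hB2' : ∀ j, j ≤ n → ∀ y : ℝ, ‖iteratedDeriv j (fun y => (starRingEnd ℂ) (V y)) y‖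
      ≤ S * 1^j / T^j := by
    intro j hj y
    rw [hB2 j y]
    calc ‖iteratedDeriv j V y‖ ≤ D j / T^j := hD j y
      _ ≤ S * 1^j / T^j := by
          have := hDS j hj
          rw [one_pow, mul_one]
          gcongr
  have hB3 : ∀ (j : ℕ), ∀ y ∈ Icc T (3*T),
      ‖iteratedDeriv j (fun y : ℝ => Complex.exp (w * y)) y‖ ≤ 1 * 4^j / T^j := by
    intro j y hy
    rw [congrFun (gst_iteratedDeriv_cexp_mul w j) y, norm_mul, norm_pow]
    have hwnorm : ‖w‖ = (x+1)/T := by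
      have : w = ((-(x+1)/T : ℝ) : ℂ) := by rw [hwdef]; push_cast; ring
      rw [this, Complex.norm_real, Real.norm_eq_abs, abs_div, abs_neg, abs_of_pos (by linarith : (0:ℝ) < x+1),
        abs_of_pos hT0]
    have hexp : ‖Complex.exp (w * y)‖ ≤ 1 := by
      have harg : w * (y:ℂ) = ((-(x+1)/T * y : ℝ) : ℂ) := by rw [hwdef]; push_cast; ring
      rw [harg, Complex.norm_exp]
      simp only [Complex.ofReal_re]
      rw [Real.exp_le_one_iff]
      have hy0 : 0 < y := lt_of_lt_of_le hT0 hy.1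
      have h1 : 0 ≤ (x+1)/T * y := by positivity
      have h2 : -(x+1)/T * y = -((x+1)/T * y) := by ring
      linarith
    calc ‖w‖^j * ‖Complex.exp (w * y)‖ ≤ ((x+1)/T)^j * 1 := by
          rw [hwnorm]
          exact mul_le_mul_of_nonneg_left hexp (by positivity)
      _ ≤ 1 * 4^j / T^j := by
          rw [mul_one, one_mul, div_pow]
          have h4 : ((x+1))^j ≤ 4^j := pow_le_pow_left₀ (by linarith) (by linarith) j
          gcongr
  have hB4 : ∀ (j : ℕ), ∀ y ∈ Icc T (3*T),
      ‖iteratedDeriv j (fun t : ℝ => (t:ℂ)) y‖ ≤ (3*T) * 1^j / T^j := by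
    intro j y hy
    match j with
    | 0 =>
      simp only [iteratedDeriv_zero, pow_zero, mul_one, div_one]
      rw [Complex.norm_real, Real.norm_eq_abs, abs_of_pos (lt_of_lt_of_le hT0 hy.1)]
      exact hy.2
    | 1 =>
      rw [iteratedDeriv_one, gst_deriv_ofReal]
      simp only [norm_one, pow_one]
      rw [mul_one, le_div_iff₀ (by positivity)]
      nlinarith
    | (j+2) =>
      rw [iteratedDeriv_succ', gst_deriv_ofReal, gst_iteratedDeriv_const_zero]
      simp only [norm_zero]
      positivity
  -- combined bound on the derivatives of g
  have hBg : ∀ j, j ≤ n → ∀ y ∈ Icc T (3*T),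
      ‖iteratedDeriv j g y‖ ≤ (3*T) * S^2 * 9^j / T^j := by
    intro j hj y hy
    have hVcomp : ContDiff ℝ ((⊤:ℕ∞):WithTop ℕ∞) (fun y : ℝ => V (x*y)) :=
      (hV.comp (contDiff_const.mul contDiff_id)).of_le (by simp)
    have h12 : ∀ i, i ≤ j → ‖iteratedDeriv i
        (fun z : ℝ => V (x*z) * (starRingEnd ℂ) (V z)) y‖ ≤ (S*S) * 4^i / T^i := by
      intro i hi
      have := gst_mul_bound (y := y) (n := i) hVcomp (hconjV.of_le (by simp)) hT0
        (le_of_lt hS0) (le_of_lt hS0) (by norm_num) (by norm_num)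
        (fun k hk => hB1 k (by omega) y) (fun k hk => hB2' k (by omega) y)
      have h34 : (3:ℝ) + 1 = 4 := by norm_num
      rw [h34] at this
      exact this
    have h123 : ∀ i, i ≤ j → ‖iteratedDeriv i
        (fun z : ℝ => V (x*z) * (starRingEnd ℂ) (V z) * Complex.exp (w * z)) y‖
        ≤ (S*S*1) * 8^i / T^i := by
      intro i hi
      have := gst_mul_bound (y := y) (n := i)
        (hVcomp.mul (hconjV.of_le (by simp))) ((gst_contDiff_cexp_mul w).of_le (by simp)) hT0
        (by positivity) (by norm_num) (by norm_num) (by norm_num)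
        (fun k hk => h12 k (by omega)) (fun k hk => hB3 k y hy)
      have h48 : (4:ℝ) + 4 = 8 := by norm_num
      rw [h48] at this
      exact this
    have := gst_mul_bound (y := y) (n := j)
      ((hVcomp.mul (hconjV.of_le (by simp))).mul ((gst_contDiff_cexp_mul w).of_le (by simp)))
      (gst_contDiff_ofReal.of_le (by simp)) hT0
      (by positivity) (by positivity) (by norm_num) (by norm_num)
      (fun k hk => h123 k (by omega)) (fun k hk => hB4 k y hy)
    have h89 : (8:ℝ) + 1 = 9 := by norm_num
    rw [h89] at this
    calc ‖iteratedDeriv j g y‖ = ‖iteratedDeriv j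
          (fun z : ℝ => (V (x*z) * (starRingEnd ℂ) (V z) * Complex.exp (w * z)) * (z:ℂ)) y‖ := by
            rw [hgdef]
      _ ≤ (S*S*1) * (3*T) * 9^j / T^j := this
      _ = (3*T) * S^2 * 9^j / T^j := by ring
  -- integral bound on derivatives of g
  have hIg : ∀ j, j ≤ n → (∫ y : ℝ, ‖iteratedDeriv j g y‖) ≤ 6 * S^2 * 9^j * T^2 / T^j := by
    intro j hj
    have hoff : ∀ y : ℝ, y ∉ Icc T (3*T) → ‖iteratedDeriv j g y‖ = 0 := by
      intro y hy
      have h1 : y ∉ tsupport g := by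
        intro hmem
        exact hy (closure_minimal (fun z hz => by
          by_contra hzn
          exact hz (hgoff z hzn)) isClosed_Icc hmem)
      have h2 : iteratedFDeriv ℝ j g y = 0 :=
        image_eq_zero_of_notMem_tsupport (fun h => h1 (tsupport_iteratedFDeriv_subset j h))
      rw [iteratedDeriv_eq_iteratedFDeriv, h2]
      simp
    have heq : (∫ y : ℝ, ‖iteratedDeriv j g y‖)
        = ∫ y in Icc T (3*T), ‖iteratedDeriv j g y‖ :=
      (MeasureTheory.setIntegral_eq_integral_of_forall_compl_eq_zero fun y hy => hoff y hy).symm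
    have hfin : volume (Icc T (3*T)) < ⊤ := by
      rw [Real.volume_Icc]; exact ENNReal.ofReal_lt_top
    have hb : ∀ y ∈ Icc T (3*T), ‖‖iteratedDeriv j g y‖‖ ≤ (3*T) * S^2 * 9^j / T^j := by
      intro y hy
      rw [Real.norm_eq_abs, _root_.abs_of_nonneg (norm_nonneg _)]
      exact hBg j hj y hy
    have hnorm := MeasureTheory.norm_setIntegral_le_of_norm_le_const hfin hb
    have hvol : volume.real (Icc T (3*T)) = 2*T := by
      rw [Measure.real, Real.volume_Icc, ENNReal.toReal_ofReal (by linarith)]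
      ring
    rw [hvol] at hnorm
    rw [heq]
    calc (∫ y in Icc T (3*T), ‖iteratedDeriv j g y‖)
        ≤ ‖∫ y in Icc T (3*T), ‖iteratedDeriv j g y‖‖ := le_abs_self _
      _ ≤ (3*T) * S^2 * 9^j / T^j * (2*T) := hnorm
      _ = 6 * S^2 * 9^j * T^2 / T^j := by ring
  -- trivial bound
  have htriv : ‖gstJ T τ x V‖ ≤ 6 * S^2 * T^2 := by
    rw [hJeq]
    calc ‖∫ y : ℝ, g y * Complex.exp (Complex.I * ξ * y)‖
        ≤ ∫ y : ℝ, ‖g y * Complex.exp (Complex.I * ξ * y)‖ := norm_integral_le_integral_norm _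
      _ = ∫ y : ℝ, ‖iteratedDeriv 0 g y‖ := by
          congr 1; funext y
          rw [norm_mul, gst_norm_exp_I_mul, mul_one, iteratedDeriv_zero]
      _ ≤ 6 * S^2 * 9^0 * T^2 / T^0 := hIg 0 (Nat.zero_le n)
      _ = 6 * S^2 * T^2 := by norm_num
  have h9pos : (0:ℝ) < 9^n := pow_pos (by norm_num) n
  constructor
  · calc ‖gstJ T τ x V‖ ≤ 6 * S^2 * T^2 := htriv
      _ ≤ (6 * S^2 * 9^n + 6 * S^2) * T^2 := by
          have h0 : 0 ≤ 6*S^2*9^n*T^2 := by positivity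
          nlinarith [h0]
  · intro hxne
    have hξne : ξ ≠ 0 := by
      rw [hξdef]
      exact mul_ne_zero (ne_of_gt hτ0) (sub_ne_zero.mpr hxne)
    have hξpos : 0 < |ξ| := abs_pos.mpr hξne
    have h2 : ‖gstJ T τ x V‖ ≤ |ξ|⁻¹^n * (6 * S^2 * 9^n * T^2 / T^n) := by
      rw [hJeq]
      refine le_trans (gst_ibp n g (hgV.of_le (by simp)) hgc ξ hξne) ?_
      exact mul_le_mul_of_nonneg_left (hIg n le_rfl) (by positivity)
    have habs : T * τ * |x-1| = T * |ξ| := by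
      rw [hξdef, abs_mul, abs_of_pos hτ0]; ring
    rw [habs]
    calc ‖gstJ T τ x V‖ * (T * |ξ|)^n
        ≤ (|ξ|⁻¹^n * (6 * S^2 * 9^n * T^2 / T^n)) * (T * |ξ|)^n :=
          mul_le_mul_of_nonneg_right h2 (by positivity)
      _ = 6 * S^2 * 9^n * T^2 := by
          rw [mul_pow, inv_pow]
          field_simp
      _ ≤ (6 * S^2 * 9^n + 6 * S^2) * T^2 := by
          have h0 : 0 ≤ 6*S^2*T^2 := by positivity
          nlinarith [h0]

private lemma gst_part1 (D : ℕ → ℝ) (A : ℝ) (hA : 0 ≤ A) :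
    ∃ C > (0:ℝ), ∀ (T τ x : ℝ) (V : ℝ → ℂ), 1 ≤ T → 1 ≤ τ →
      ContDiff ℝ (⊤ : ℕ∞) V → Function.support V ⊆ Icc T (3 * T) →
      (∀ (j : ℕ) (z : ℝ), ‖iteratedDeriv j V z‖ ≤ D j / T ^ j) →
      ‖gstJ T τ x V‖ ≤ C * T ^ 2 * (1 + T * τ * |x - 1|) ^ (-A) := by
  obtain ⟨C₁, hC₁, hkey⟩ := gst_key D ⌈A⌉₊
  have h2A : (0:ℝ) < (2:ℝ)^A := Real.rpow_pos_of_pos two_pos A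
  refine ⟨C₁ * 2^A, by positivity, ?_⟩
  intro T τ x V hT hτ hV hsupp hD
  obtain ⟨hvan, htriv, hosc⟩ := hkey T τ x V hT hτ hV hsupp hD
  have hT0 : 0 < T := lt_of_lt_of_le one_pos hT
  have hτ0 : 0 < τ := lt_of_lt_of_le one_pos hτ
  set u : ℝ := T * τ * |x - 1| with hudef
  have hu0 : 0 ≤ u := by positivity
  have h1u : 0 < 1 + u := by linarith
  by_cases hu : u ≤ 1
  · have hr : (2:ℝ)^(-A) ≤ (1+u)^(-A) :=
      Real.rpow_le_rpow_of_nonpos h1u (by linarith) (neg_nonpos.mpr hA)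
    have h2 : (2:ℝ)^A * (2:ℝ)^(-A) = 1 := by
      rw [← Real.rpow_add two_pos]; simp
    calc ‖gstJ T τ x V‖ ≤ C₁ * T^2 := htriv
      _ = (C₁ * 2^A) * T^2 * (2:ℝ)^(-A) := by
          rw [show (C₁ * 2^A) * T^2 * (2:ℝ)^(-A) = C₁ * T^2 * ((2:ℝ)^A * (2:ℝ)^(-A)) by ring,
            h2, mul_one]
      _ ≤ (C₁ * 2^A) * T^2 * (1+u)^(-A) := by
          apply mul_le_mul_of_nonneg_left hr
          positivity
  · push_neg at hu
    have hxne : x ≠ 1 := by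
      intro h
      rw [hudef, h] at hu
      simp at hu
      linarith
    have hosc' := hosc hxne
    have hupos : 0 < u := by linarith
    have hun : (0:ℝ) < u ^ (⌈A⌉₊) := by positivity
    have hstep : (1+u)^A ≤ (2:ℝ)^A * u^((⌈A⌉₊:ℝ)) := by
      calc (1+u)^A ≤ (2*u)^A := Real.rpow_le_rpow (by linarith) (by linarith) hA
        _ = (2:ℝ)^A * u^A := Real.mul_rpow (by norm_num) (by linarith)
        _ ≤ (2:ℝ)^A * u^((⌈A⌉₊:ℝ)) := by
            apply mul_le_mul_of_nonneg_left _ (le_of_lt h2A)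
            exact Real.rpow_le_rpow_of_exponent_le (le_of_lt hu) (Nat.le_ceil A)
    have hinv : ((2:ℝ)^A * u^((⌈A⌉₊:ℝ)))⁻¹ ≤ (1+u)^(-A) := by
      rw [Real.rpow_neg (le_of_lt h1u)]
      exact inv_anti₀ (Real.rpow_pos_of_pos h1u A) hstep
    calc ‖gstJ T τ x V‖ = ‖gstJ T τ x V‖ * u^(⌈A⌉₊) * (u^(⌈A⌉₊))⁻¹ := by
          field_simp
      _ ≤ C₁ * T^2 * (u^(⌈A⌉₊))⁻¹ := mul_le_mul_of_nonneg_right hosc' (by positivity)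
      _ = (C₁ * 2^A) * T^2 * ((2:ℝ)^A * u^((⌈A⌉₊:ℝ)))⁻¹ := by
          rw [Real.rpow_natCast u, mul_inv]
          field_simp
      _ ≤ (C₁ * 2^A) * T^2 * (1+u)^(-A) := by
          apply mul_le_mul_of_nonneg_left hinv
          positivity

private lemma gst_majorant (a : ℝ) (ha : 0 < a) :
    IntegrableOn (fun x : ℝ => ((1 + a * |x - 1|)^2)⁻¹) (Ioi (0:ℝ)) ∧
    (∫ x in Ioi (0:ℝ), ((1 + a * |x - 1|)^2)⁻¹) ≤ 2 / a := by
  -- right piece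
  have hderivR : ∀ x ∈ Ici (1:ℝ), HasDerivAt (fun x : ℝ => -(a⁻¹) * (1 + a*(x-1))⁻¹)
      (((1 + a*(x-1))^2)⁻¹) x := by
    intro x hx
    have hx1 : (1:ℝ) ≤ x := hx
    have hpos : 0 < 1 + a*(x-1) := by nlinarith
    have h1 : HasDerivAt (fun x : ℝ => 1 + a*(x-1)) a x := by
      simpa using (((hasDerivAt_id x).sub_const 1).const_mul a).const_add 1
    have h3 := (h1.inv (ne_of_gt hpos)).const_mul (-(a⁻¹))
    refine h3.congr_deriv ?_
    field_simp [ha.ne']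
  have hnonnegR : ∀ x ∈ Ioi (1:ℝ), 0 ≤ ((1 + a*(x-1))^2)⁻¹ := by
    intro x hx; positivity
  have htendR : Tendsto (fun x : ℝ => -(a⁻¹) * (1 + a*(x-1))⁻¹) atTop (𝓝 0) := by
    have h1 : Tendsto (fun x : ℝ => 1 + a*(x-1)) atTop atTop := by
      apply tendsto_atTop_add_const_left
      apply Tendsto.const_mul_atTop ha
      have := tendsto_atTop_add_const_right atTop (-1 : ℝ) tendsto_id
      simpa [sub_eq_add_neg] using this
    have h2 : Tendsto (fun x : ℝ => (1 + a*(x-1))⁻¹) atTop (𝓝 0) := h1.inv_tendsto_atTop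
    have h3 := h2.const_mul (-(a⁻¹))
    simpa using h3
  have hintR : IntegrableOn (fun x : ℝ => ((1 + a*(x-1))^2)⁻¹) (Ioi (1:ℝ)) :=
    integrableOn_Ioi_deriv_of_nonneg' hderivR hnonnegR htendR
  have hvalR : (∫ x in Ioi (1:ℝ), ((1 + a*(x-1))^2)⁻¹) = a⁻¹ := by
    rw [integral_Ioi_of_hasDerivAt_of_nonneg' hderivR hnonnegR htendR]
    simp
  -- left piece
  have hderivL : ∀ x ∈ uIcc (0:ℝ) 1, HasDerivAt (fun x : ℝ => a⁻¹ * (1 + a*(1-x))⁻¹)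
      (((1 + a*(1-x))^2)⁻¹) x := by
    intro x hx
    rw [Set.uIcc_of_le zero_le_one] at hx
    have hpos : 0 < 1 + a*(1-x) := by nlinarith [hx.2]
    have h1 : HasDerivAt (fun x : ℝ => 1 + a*(1-x)) (-a) x := by
      have := (((hasDerivAt_id x).const_sub 1).const_mul a).const_add 1
      simpa using this
    have h3 := (h1.inv (ne_of_gt hpos)).const_mul (a⁻¹)
    refine h3.congr_deriv ?_
    field_simp [ha.ne']
  have hcontL : ContinuousOn (fun x : ℝ => ((1 + a*(1-x))^2)⁻¹) (uIcc (0:ℝ) 1) := by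
    apply ContinuousOn.inv₀
    · fun_prop
    · intro x hx
      rw [Set.uIcc_of_le zero_le_one] at hx
      have hpos : 0 < 1 + a*(1-x) := by nlinarith [hx.2]
      positivity
  have hii : IntervalIntegrable (fun x : ℝ => ((1 + a*(1-x))^2)⁻¹) volume 0 1 :=
    hcontL.intervalIntegrable
  have hvalL : (∫ x in (0:ℝ)..1, ((1 + a*(1-x))^2)⁻¹)
      = a⁻¹ * (1 + a*(1-1))⁻¹ - a⁻¹ * (1 + a*(1-0))⁻¹ :=
    intervalIntegral.integral_eq_sub_of_hasDerivAt hderivL hii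
  have hintL : IntegrableOn (fun x : ℝ => ((1 + a*(1-x))^2)⁻¹) (Ioc (0:ℝ) 1) :=
    (intervalIntegrable_iff_integrableOn_Ioc_of_le zero_le_one).mp hii
  have hvalL' : (∫ x in Ioc (0:ℝ) 1, ((1 + a*(1-x))^2)⁻¹) ≤ a⁻¹ := by
    rw [← intervalIntegral.integral_of_le zero_le_one, hvalL]
    have h1 : 0 ≤ a⁻¹ * (1 + a*(1-0))⁻¹ := by positivity
    simp only [sub_self, mul_zero, add_zero, inv_one, mul_one]
    linarith
  -- put the pieces together, switching to the |x-1| integrand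
  have heqR : EqOn (fun x : ℝ => ((1 + a*(x-1))^2)⁻¹)
      (fun x : ℝ => ((1 + a*|x-1|)^2)⁻¹) (Ioi (1:ℝ)) := by
    intro x hx
    simp only
    rw [abs_of_pos (sub_pos.mpr hx)]
  have heqL : EqOn (fun x : ℝ => ((1 + a*(1-x))^2)⁻¹)
      (fun x : ℝ => ((1 + a*|x-1|)^2)⁻¹) (Ioc (0:ℝ) 1) := by
    intro x hx
    simp only
    rw [abs_of_nonpos (by linarith [hx.2] : x - 1 ≤ 0), neg_sub]
  have hintR' : IntegrableOn (fun x : ℝ => ((1 + a*|x-1|)^2)⁻¹) (Ioi (1:ℝ)) :=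
    hintR.congr_fun heqR measurableSet_Ioi
  have hintL' : IntegrableOn (fun x : ℝ => ((1 + a*|x-1|)^2)⁻¹) (Ioc (0:ℝ) 1) :=
    hintL.congr_fun heqL measurableSet_Ioc
  have hunion : Ioc (0:ℝ) 1 ∪ Ioi (1:ℝ) = Ioi (0:ℝ) := Ioc_union_Ioi_eq_Ioi zero_le_one
  constructor
  · rw [← hunion]
    exact hintL'.union hintR'
  · rw [← hunion, MeasureTheory.setIntegral_union (Ioc_disjoint_Ioi le_rfl) measurableSet_Ioi
      hintL' hintR']
    have e1 : (∫ x in Ioc (0:ℝ) 1, ((1 + a*|x-1|)^2)⁻¹) ≤ a⁻¹ := by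
      rw [← MeasureTheory.setIntegral_congr_fun measurableSet_Ioc heqL]
      exact hvalL'
    have e2 : (∫ x in Ioi (1:ℝ), ((1 + a*|x-1|)^2)⁻¹) = a⁻¹ := by
      rw [← MeasureTheory.setIntegral_congr_fun measurableSet_Ioi heqR]
      exact hvalR
    rw [e2]
    rw [show (2:ℝ)/a = a⁻¹ + a⁻¹ by field_simp; ring]
    linarith

private lemma gst_pointwise (T τ β x y : ℝ) (V : ℝ → ℂ) (hx : 0 < x) (hy : 0 < y) :
    (V (y*x) * ((y*x : ℝ):ℂ)^((β:ℂ)*Complex.I) * Complex.exp (-((y*x : ℝ):ℂ)/(T:ℂ)) *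
      Complex.exp ((τ:ℂ)*((y*x : ℝ):ℂ)*Complex.I))
      * (starRingEnd ℂ) (V y * (y:ℂ)^((β:ℂ)*Complex.I) * Complex.exp (-(y:ℂ)/(T:ℂ)) *
        Complex.exp ((τ:ℂ)*(y:ℂ)*Complex.I)) * (y:ℂ)
    = (x:ℂ)^((β:ℂ)*Complex.I) *
      (V (x*y) * (starRingEnd ℂ) (V y) * Complex.exp (-((x:ℂ)+1)*(y:ℂ)/(T:ℂ)) *
       Complex.exp ((τ:ℂ)*((x:ℂ)-1)*(y:ℂ)*Complex.I) * (y:ℂ)) := by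
  have hyx : y * x = x * y := mul_comm y x
  rw [hyx]
  have hcast : ((x*y : ℝ):ℂ) = (x:ℂ)*(y:ℂ) := by push_cast; ring
  rw [hcast, Complex.mul_cpow_ofReal_nonneg hx.le hy.le]
  have hyy : (y:ℂ)^((β:ℂ)*Complex.I) * (starRingEnd ℂ) ((y:ℂ)^((β:ℂ)*Complex.I)) = 1 := by
    rw [Complex.mul_conj]
    have habs : ‖(y:ℂ)^((β:ℂ)*Complex.I)‖ = 1 := by
      rw [Complex.norm_cpow_eq_rpow_re_of_pos hy]
      simp
    have hsq : Complex.normSq ((y:ℂ)^((β:ℂ)*Complex.I)) = 1 := by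
      rw [Complex.normSq_eq_norm_sq, habs]; norm_num
    rw [hsq]
    norm_num
  have c2 : (starRingEnd ℂ) (Complex.exp (-(y:ℂ)/(T:ℂ))) = Complex.exp (-(y:ℂ)/(T:ℂ)) := by
    rw [← Complex.exp_conj]
    congr 1
    simp [map_div₀, Complex.conj_ofReal]
  have c3 : (starRingEnd ℂ) (Complex.exp ((τ:ℂ)*(y:ℂ)*Complex.I))
      = Complex.exp (-((τ:ℂ)*(y:ℂ)*Complex.I)) := by
    rw [← Complex.exp_conj]
    congr 1
    simp [Complex.conj_I, Complex.conj_ofReal]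
  have e1 : Complex.exp (-((x:ℂ)*(y:ℂ))/(T:ℂ)) * Complex.exp (-(y:ℂ)/(T:ℂ))
      = Complex.exp (-((x:ℂ)+1)*(y:ℂ)/(T:ℂ)) := by
    rw [← Complex.exp_add]; congr 1; ring
  have e2 : Complex.exp ((τ:ℂ)*((x:ℂ)*(y:ℂ))*Complex.I) * Complex.exp (-((τ:ℂ)*(y:ℂ)*Complex.I))
      = Complex.exp ((τ:ℂ)*((x:ℂ)-1)*(y:ℂ)*Complex.I) := by
    rw [← Complex.exp_add]; congr 1; ring
  simp only [map_mul, c2, c3]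
  calc V (x*y) * ((x:ℂ)^((β:ℂ)*Complex.I) * (y:ℂ)^((β:ℂ)*Complex.I)) *
        Complex.exp (-((x:ℂ)*(y:ℂ))/(T:ℂ)) * Complex.exp ((τ:ℂ)*((x:ℂ)*(y:ℂ))*Complex.I) *
        ((starRingEnd ℂ) (V y) * (starRingEnd ℂ) ((y:ℂ)^((β:ℂ)*Complex.I)) *
          Complex.exp (-(y:ℂ)/(T:ℂ)) * Complex.exp (-((τ:ℂ)*(y:ℂ)*Complex.I))) * (y:ℂ)
      = (V (x*y) * (starRingEnd ℂ) (V y) * (y:ℂ) * (x:ℂ)^((β:ℂ)*Complex.I)) *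
        ((y:ℂ)^((β:ℂ)*Complex.I) * (starRingEnd ℂ) ((y:ℂ)^((β:ℂ)*Complex.I))) *
        (Complex.exp (-((x:ℂ)*(y:ℂ))/(T:ℂ)) * Complex.exp (-(y:ℂ)/(T:ℂ))) *
        (Complex.exp ((τ:ℂ)*((x:ℂ)*(y:ℂ))*Complex.I) *
          Complex.exp (-((τ:ℂ)*(y:ℂ)*Complex.I))) := by ring
    _ = _ := by rw [hyy, e1, e2]; ring

private lemma gst_f_cont (T τ β : ℝ) (hT : 1 ≤ T) (V : ℝ → ℂ)
    (hV : ContDiff ℝ (⊤ : ℕ∞) V) (hsupp : Function.support V ⊆ Icc T (3*T)) :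
    Continuous (fun u : ℝ => V u * (u:ℂ)^((β:ℂ)*Complex.I) *
      Complex.exp (-(u:ℂ)/(T:ℂ)) * Complex.exp ((τ:ℂ)*(u:ℂ)*Complex.I)) := by
  rw [continuous_iff_continuousAt]
  intro u
  by_cases hu : 0 < u
  · have h1 : ContinuousAt (fun u : ℝ => (u:ℂ)^((β:ℂ)*Complex.I)) u := by
      apply ContinuousAt.cpow (Complex.continuous_ofReal.continuousAt) continuousAt_const
      exact Complex.ofReal_mem_slitPlane.mpr hu
    have h2 : Continuous (fun u : ℝ => Complex.exp (-(u:ℂ)/(T:ℂ))) :=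
      Complex.continuous_exp.comp ((Complex.continuous_ofReal.neg).div_const _)
    have h3 : Continuous (fun u : ℝ => Complex.exp ((τ:ℂ)*(u:ℂ)*Complex.I)) :=
      Complex.continuous_exp.comp (((continuous_const.mul Complex.continuous_ofReal).mul
        continuous_const))
    exact ((hV.continuous.continuousAt.mul h1).mul h2.continuousAt).mul h3.continuousAt
  · have hu' : u < T := by
      push_neg at hu
      linarith
    have hev : (fun u : ℝ => V u * (u:ℂ)^((β:ℂ)*Complex.I) *
        Complex.exp (-(u:ℂ)/(T:ℂ)) * Complex.exp ((τ:ℂ)*(u:ℂ)*Complex.I))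
        =ᶠ[nhds u] (fun _ => 0) := by
      apply Filter.eventually_of_mem (Iio_mem_nhds hu')
      intro z hz
      have hVz : V z = 0 := by
        by_contra hne
        have := (hsupp (Function.mem_support.mpr hne)).1
        exact absurd this (not_le.mpr hz)
      simp [hVz]
    exact ContinuousAt.congr continuousAt_const hev.symm

/-- The "Gauss sum trick": for a smooth bump `V` at scale `T` (supported in `[T,3T]`,
with `|V^{(j)}| ≤ D_j T^{-j}`), the inner `y`-integral of
`Φ(x,y) = V(xy) conj(V(y)) e^{-(x+1)y/T} e^{iτ(x-1)y}` decays rapidly off `x = 1`: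
`|∫₀^∞ Φ(x,y) y dy| ≤ C T² (1 + Tτ|x-1|)^{-A}`, and consequently
`|∫₀^∞ V(x) x^{iβ} e^{-x/T} e^{iτx} dx|² ≤ C T²/(Tτ)`. -/
theorem gauss_sum_trick (D : ℕ → ℝ) (A : ℝ) (hA : 0 ≤ A) :
    ∃ C > (0 : ℝ), ∀ (T τ β : ℝ) (V : ℝ → ℂ),
      1 ≤ T → 1 ≤ τ →
      ContDiff ℝ (⊤ : ℕ∞) V →
      Function.support V ⊆ Icc T (3 * T) →
      (∀ (j : ℕ) (x : ℝ), ‖iteratedDeriv j V x‖ ≤ D j / T ^ j) →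
      (∀ x : ℝ,
        ‖∫ y in Ioi (0 : ℝ), V (x * y) * (starRingEnd ℂ) (V y) *
            Complex.exp (-((x : ℂ) + 1) * (y : ℂ) / (T : ℂ)) *
            Complex.exp ((τ : ℂ) * ((x : ℂ) - 1) * (y : ℂ) * Complex.I) * (y : ℂ)‖
          ≤ C * T ^ 2 * (1 + T * τ * |x - 1|) ^ (-A)) ∧
      ‖∫ x in Ioi (0 : ℝ), V x * (x : ℂ) ^ ((β : ℂ) * Complex.I) *
          Complex.exp (-(x : ℂ) / (T : ℂ)) * Complex.exp ((τ : ℂ) * (x : ℂ) * Complex.I)‖ ^ 2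
        ≤ C * T ^ 2 / (T * τ) := by
  obtain ⟨C₁, hC₁, hpart1⟩ := gst_part1 D A hA
  obtain ⟨C₂, hC₂, hkey2⟩ := gst_key D 2
  refine ⟨C₁ + 8*C₂, by positivity, ?_⟩
  intro T τ β V hT hτ hV hsupp hD
  have hT0 : 0 < T := lt_of_lt_of_le one_pos hT
  have hτ0 : 0 < τ := lt_of_lt_of_le one_pos hτ
  constructor
  · intro x
    have h := hpart1 T τ x V hT hτ hV hsupp hD
    have hr : (0:ℝ) ≤ (1 + T*τ*|x-1|) ^ (-A) :=
      le_of_lt (Real.rpow_pos_of_pos (by positivity) _)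
    show ‖gstJ T τ x V‖ ≤ _
    calc ‖gstJ T τ x V‖ ≤ C₁ * T^2 * (1 + T*τ*|x-1|)^(-A) := h
      _ ≤ (C₁ + 8*C₂) * T^2 * (1 + T*τ*|x-1|)^(-A) := by
          apply mul_le_mul_of_nonneg_right _ hr
          nlinarith [sq_nonneg T]
  · set f : ℝ → ℂ := fun u => V u * (u:ℂ)^((β:ℂ)*Complex.I) *
      Complex.exp (-(u:ℂ)/(T:ℂ)) * Complex.exp ((τ:ℂ)*(u:ℂ)*Complex.I) with hfdef
    set I : ℂ := ∫ x in Ioi (0:ℝ), f x with hIdef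
    have hfc : Continuous f := gst_f_cont T τ β hT V hV hsupp
    have hFsupp : ∀ u : ℝ, u ∉ Icc T (3*T) → f u = 0 := by
      intro u hu
      have hVu : V u = 0 := by
        by_contra hne
        exact hu (hsupp (Function.mem_support.mpr hne))
      simp [hfdef, hVu]
    have hconjI : (starRingEnd ℂ) I = ∫ y in Ioi (0:ℝ), (starRingEnd ℂ) (f y) := by
      rw [hIdef, ← integral_conj]
    have h2 : I * (starRingEnd ℂ) I = ∫ y in Ioi (0:ℝ), I * (starRingEnd ℂ) (f y) := by
      rw [hconjI, ← MeasureTheory.integral_const_mul]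
    have h3 : ∀ y ∈ Ioi (0:ℝ), I * (starRingEnd ℂ) (f y)
        = ∫ x in Ioi (0:ℝ), f (y*x) * (starRingEnd ℂ) (f y) * (y:ℂ) := by
      intro y hy
      have hy0 : (0:ℝ) < y := hy
      have hsub : (∫ x in Ioi (0:ℝ), f (y*x)) = y⁻¹ • I := by
        have h := MeasureTheory.integral_comp_mul_left_Ioi f 0 hy0
        rw [mul_zero] at h
        rw [h, hIdef]
      symm
      calc (∫ x in Ioi (0:ℝ), f (y*x) * (starRingEnd ℂ) (f y) * (y:ℂ))
          = (∫ x in Ioi (0:ℝ), f (y*x)) * ((starRingEnd ℂ) (f y) * (y:ℂ)) := by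
            rw [← MeasureTheory.integral_mul_const]
            congr 1; funext x; ring
        _ = (y⁻¹ • I) * ((starRingEnd ℂ) (f y) * (y:ℂ)) := by rw [hsub]
        _ = I * (starRingEnd ℂ) (f y) := by
            rw [Complex.real_smul]
            have hyne : (y:ℂ) ≠ 0 := by exact_mod_cast ne_of_gt hy0
            push_cast
            field_simp
    have h4 : I * (starRingEnd ℂ) I = ∫ y in Ioi (0:ℝ), ∫ x in Ioi (0:ℝ),
        f (y*x) * (starRingEnd ℂ) (f y) * (y:ℂ) :=
      h2.trans (MeasureTheory.setIntegral_congr_fun measurableSet_Ioi fun y hy => h3 y hy)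
    have hF : Continuous (fun p : ℝ × ℝ => f (p.1 * p.2) * (starRingEnd ℂ) (f p.1) * (p.1:ℂ)) := by
      apply Continuous.mul
      apply Continuous.mul
      · exact hfc.comp (continuous_fst.mul continuous_snd)
      · exact continuous_star.comp (hfc.comp continuous_fst)
      · exact Complex.continuous_ofReal.comp continuous_fst
    have hFsupp2 : ∀ p : ℝ × ℝ, p ∉ (Icc T (3*T) ×ˢ Icc (1/3:ℝ) 3) →
        f (p.1 * p.2) * (starRingEnd ℂ) (f p.1) * (p.1:ℂ) = 0 := by
      intro p hp
      by_cases h1 : f p.1 = 0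
      · simp [h1]
      · have hp1 : p.1 ∈ Icc T (3*T) := by
          by_contra hc; exact h1 (hFsupp _ hc)
        have hp1pos : 0 < p.1 := lt_of_lt_of_le hT0 hp1.1
        by_cases hflat : f (p.1 * p.2) = 0
        · simp [hflat]
        · have hp12 : p.1 * p.2 ∈ Icc T (3*T) := by
            by_contra hc; exact hflat (hFsupp _ hc)
          exfalso
          apply hp
          have hp2pos : 0 < p.2 := by nlinarith [hp12.1, hp1.2]
          constructor
          · exact hp1
          · constructor
            · nlinarith [hp12.1, hp1.2]
            · nlinarith [hp12.2, hp1.1]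
    have hFcs : HasCompactSupport
        (fun p : ℝ × ℝ => f (p.1 * p.2) * (starRingEnd ℂ) (f p.1) * (p.1:ℂ)) :=
      HasCompactSupport.intro (isCompact_Icc.prod isCompact_Icc) hFsupp2
    have hFint : Integrable (fun p : ℝ × ℝ => f (p.1 * p.2) * (starRingEnd ℂ) (f p.1) * (p.1:ℂ)) :=
      hF.integrable_of_hasCompactSupport hFcs
    have hFint2 : Integrable
        (Function.uncurry fun y x : ℝ => f (y*x) * (starRingEnd ℂ) (f y) * (y:ℂ))
        ((volume.restrict (Ioi (0:ℝ))).prod (volume.restrict (Ioi (0:ℝ)))) := by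
      rw [Measure.prod_restrict, ← Measure.volume_eq_prod]
      exact hFint.restrict
    have h5 : I * (starRingEnd ℂ) I = ∫ x in Ioi (0:ℝ), ∫ y in Ioi (0:ℝ),
        f (y*x) * (starRingEnd ℂ) (f y) * (y:ℂ) := by
      rw [h4]
      exact MeasureTheory.integral_integral_swap hFint2
    have h6 : ∀ x ∈ Ioi (0:ℝ), (∫ y in Ioi (0:ℝ), f (y*x) * (starRingEnd ℂ) (f y) * (y:ℂ))
        = (x:ℂ)^((β:ℂ)*Complex.I) * gstJ T τ x V := by
      intro x hx
      have hx0 : (0:ℝ) < x := hx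
      rw [show gstJ T τ x V = ∫ y in Ioi (0:ℝ), V (x * y) * (starRingEnd ℂ) (V y) *
          Complex.exp (-((x:ℂ) + 1) * (y:ℂ) / (T:ℂ)) *
          Complex.exp ((τ:ℂ) * ((x:ℂ) - 1) * (y:ℂ) * Complex.I) * (y:ℂ) from rfl,
        ← MeasureTheory.integral_const_mul]
      apply MeasureTheory.setIntegral_congr_fun measurableSet_Ioi
      intro y hy
      have hy0 : (0:ℝ) < y := hy
      simp only [hfdef]
      exact gst_pointwise T τ β x y V hx0 hy0
    have h7 : I * (starRingEnd ℂ) I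
        = ∫ x in Ioi (0:ℝ), (x:ℂ)^((β:ℂ)*Complex.I) * gstJ T τ x V :=
      h5.trans (MeasureTheory.setIntegral_congr_fun measurableSet_Ioi fun x hx => h6 x hx)
    obtain ⟨hmi, hmv⟩ := gst_majorant (T*τ) (by positivity)
    have hmaj : ∀ x ∈ Ioi (0:ℝ), ‖(x:ℂ)^((β:ℂ)*Complex.I) * gstJ T τ x V‖
        ≤ (4*C₂*T^2) * ((1 + (T*τ)*|x-1|)^2)⁻¹ := by
      intro x hx
      have hx0 : (0:ℝ) < x := hx
      have hnorm1 : ‖(x:ℂ)^((β:ℂ)*Complex.I)‖ = 1 := by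
        rw [Complex.norm_cpow_eq_rpow_re_of_pos hx0]
        simp
      rw [norm_mul, hnorm1, one_mul]
      obtain ⟨hvan, htriv2, hosc2⟩ := hkey2 T τ x V hT hτ hV hsupp hD
      have hu0 : (0:ℝ) ≤ T*τ*|x-1| := by positivity
      have hb : (0:ℝ) < (1 + T*τ*|x-1|)^2 := by positivity
      have hmain : ‖gstJ T τ x V‖ * (1 + T*τ*|x-1|)^2 ≤ 4*C₂*T^2 := by
        by_cases hu : T*τ*|x-1| ≤ 1
        · have h4u : (1 + T*τ*|x-1|)^2 ≤ 4 := by nlinarith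
          calc ‖gstJ T τ x V‖ * (1 + T*τ*|x-1|)^2 ≤ (C₂*T^2) * 4 := by
                apply mul_le_mul htriv2 h4u (by positivity) (by positivity)
            _ = 4*C₂*T^2 := by ring
        · push_neg at hu
          have hxne : x ≠ 1 := by
            intro h
            rw [h] at hu
            simp at hu
            linarith
          have hosc' := hosc2 hxne
          have h4u : (1 + T*τ*|x-1|)^2 ≤ 4*(T*τ*|x-1|)^2 := by nlinarith
          calc ‖gstJ T τ x V‖ * (1 + T*τ*|x-1|)^2
              ≤ ‖gstJ T τ x V‖ * (4*(T*τ*|x-1|)^2) :=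
                mul_le_mul_of_nonneg_left h4u (norm_nonneg _)
            _ = 4*(‖gstJ T τ x V‖ * (T*τ*|x-1|)^2) := by ring
            _ ≤ 4*(C₂*T^2) := by linarith [hosc']
            _ = 4*C₂*T^2 := by ring
      calc ‖gstJ T τ x V‖ = ‖gstJ T τ x V‖ * (1 + T*τ*|x-1|)^2 * ((1 + T*τ*|x-1|)^2)⁻¹ := by
            field_simp
        _ ≤ (4*C₂*T^2) * ((1 + T*τ*|x-1|)^2)⁻¹ :=
            mul_le_mul_of_nonneg_right hmain (by positivity)
    have hmint : IntegrableOn (fun x : ℝ => (4*C₂*T^2) * ((1 + (T*τ)*|x-1|)^2)⁻¹) (Ioi (0:ℝ)) :=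
      hmi.const_mul _
    have h8 : ‖I * (starRingEnd ℂ) I‖ ≤ (4*C₂*T^2) * (2/(T*τ)) := by
      rw [h7]
      refine le_trans (norm_integral_le_integral_norm _) ?_
      refine le_trans (integral_mono_of_nonneg
        (Filter.Eventually.of_forall fun x => norm_nonneg _) hmint ?_) ?_
      · exact (MeasureTheory.ae_restrict_iff' measurableSet_Ioi).mpr
          (Filter.Eventually.of_forall fun x hx => hmaj x hx)
      · rw [MeasureTheory.integral_const_mul]
        exact mul_le_mul_of_nonneg_left hmv (by positivity)
    have h9 : ‖I‖^2 = ‖I * (starRingEnd ℂ) I‖ := by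
      rw [norm_mul, RCLike.norm_conj]
      ring
    calc ‖I‖^2 = ‖I * (starRingEnd ℂ) I‖ := h9
      _ ≤ (4*C₂*T^2) * (2/(T*τ)) := h8
      _ = 8*C₂*T^2/(T*τ) := by ring
      _ ≤ (C₁ + 8*C₂)*T^2/(T*τ) := by
          apply div_le_div_of_nonneg_right ?_ (by positivity)
          nlinarith [sq_nonneg T]
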